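/- arXiv:1002.0589 — 4 statements merged into one kernel-verified Lean document; each statement's English description precedes it below -/
import Mathlib

section
/- The decoherence functional of the finite-configuration system is strongly positive: for any finite collection of events α_1, …, α_M ⊆ Ω, the M×M complex matrix with entries D(α_i, α_j) := Σ_{γ ∈ α_i} Σ_{γ̄ ∈ α_j} conj(a(γ)) · δ_{γ(N), γ̄(N)} · a(γ̄) is positive semidefinite. -/
open scoped ComplexOrder
open Matrix

/-- The decoherence functional of the finite configuration system is strongly
positive: for any finite collection of events `α 1, …, α Mev ⊆ Ω`, the matrix
with entries `D (α i) (α j)` is positive semidefinite. -/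
theorem stmt_7 (n M : ℕ) (hn : 1 ≤ n) (hM : 1 ≤ M)
    (U : Fin M → Matrix (Fin n) (Fin n) ℂ) (ψ : Fin n → ℂ)
    (amp : (Fin (M + 1) → Fin n) → ℂ)
    (h_amp : ∀ γ : Fin (M + 1) → Fin n,
      amp γ = (∏ i : Fin M, U i (γ i.succ) (γ i.castSucc)) * ψ (γ 0))
    (Mev : ℕ) (α : Fin Mev → Finset (Fin (M + 1) → Fin n)) :
    (Matrix.of fun i j : Fin Mev =>
      ∑ γ ∈ α i, ∑ γ' ∈ α j,
        (starRingEnd ℂ) (amp γ)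
          * (if γ (Fin.last M) = γ' (Fin.last M) then 1 else 0) * amp γ').PosSemidef := by
  set B : Matrix (Fin n) (Fin Mev) ℂ :=
    Matrix.of fun k i => ∑ γ ∈ α i, if γ (Fin.last M) = k then amp γ else 0 with hB
  have key : (Matrix.of fun i j : Fin Mev =>
      ∑ γ ∈ α i, ∑ γ' ∈ α j,
        (starRingEnd ℂ) (amp γ)
          * (if γ (Fin.last M) = γ' (Fin.last M) then 1 else 0) * amp γ') = Bᴴ * B := by
    ext i j
    simp only [Matrix.mul_apply, Matrix.conjTranspose_apply, Matrix.of_apply, hB]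
    simp only [star_sum, Finset.sum_mul_sum]
    conv_rhs => rw [Finset.sum_comm]
    refine Finset.sum_congr rfl fun γ _ => ?_
    conv_rhs => rw [Finset.sum_comm]
    refine Finset.sum_congr rfl fun γ' _ => ?_
    by_cases h : γ (Fin.last M) = γ' (Fin.last M) <;>
      simp [h, apply_ite star, Finset.sum_ite_eq, RCLike.star_def, eq_comm]
  rw [key]
  exact Matrix.posSemidef_conjTranspose_mul_self B
end

section
/- Let K : ℝ^d × ℝ^d → ℂ be continuous and ψ ∈ L²(ℝ^d), and suppose that for every x ∈ ℝ^d there exists a compact Lebesgue-measurable set A ⊆ ℝ^d with ψ_A(x) ≠ 0. Let I ⊆ ℝ^d be a compact d-dimensional interval (a product of d compact intervals) of positive Lebesgue measure. Then for every ε > 0 there exist finitely many compact Lebesgue-measurable sets A_1, …, A_M ⊆ ℝ^d, bounded Lebesgue-measurable sets D_1, …, D_M ⊆ ℝ^d and complex numbers c_1, …, c_M such that ‖χ_I − Σ_{k=1}^M c_k · χ_{D_k} · ψ_{A_k}‖_{L²(ℝ^d)} < ε. -/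
/-!
For each `x`, the continuous function `ψ_{A_x} / ψ_{A_x}(x)` equals `1` at `x`, hence is within
`δ` of `1` on a neighbourhood of `x`. Finitely many of these neighbourhoods cover the compact box
`I`, and disjointifying them yields a measurable partition `D_k` of `I` on each piece of which
`χ_I` is `δ`-close to `c_k ψ_{A_k}`. The `L²` error is then at most `δ · vol(I)^{1/2}`.
-/

open MeasureTheory Set Filter Topology Function
open scoped ENNReal

theorem continuous_setIntegral_mul_of_continuous {X Y 𝕜 : Type*} [TopologicalSpace X]
    [FirstCountableTopology X] [LocallyCompactSpace X] [TopologicalSpace Y] [MeasurableSpace Y]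
    [OpensMeasurableSpace Y] [RCLike 𝕜] {μ : Measure Y} {K : X × Y → 𝕜} (hK : Continuous K)
    {ψ : Y → 𝕜} {A : Set Y} (hA : IsCompact A) (hψ : IntegrableOn ψ A μ) :
    Continuous fun x => ∫ y in A, K (x, y) * ψ y ∂μ := by
  refine continuous_iff_continuousAt.2 fun x₀ => ?_
  obtain ⟨U, hU, hUx₀⟩ := exists_compact_mem_nhds x₀
  obtain ⟨C, hC⟩ := (hU.prod hA).exists_bound_of_continuousOn hK.continuousOn
  apply continuousAt_of_dominated (bound := fun y => C * ‖ψ y‖)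
  · exact .of_forall fun x =>
      (hK.comp (Continuous.prodMk_right x)).aestronglyMeasurable.mul hψ.aestronglyMeasurable
  · filter_upwards [hUx₀] with x hx
    have hKx : ∀ᵐ y ∂μ.restrict A, ‖K (x, y)‖ ≤ C :=
      (ae_restrict_iff (isClosed_le (by fun_prop) continuous_const).measurableSet).2
        (.of_forall fun y hy => hC (x, y) ⟨hx, hy⟩)
    filter_upwards [hKx] with y hy
    rw [norm_mul]
    gcongr
  · exact hψ.norm.const_mul C
  · exact .of_forall fun y => by fun_prop

theorem IsCompact.exists_measurable_partition_subordinate {X : Type*} [TopologicalSpace X]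
    [MeasurableSpace X] [OpensMeasurableSpace X] {I : Set X} (hI : IsCompact I)
    (hIm : MeasurableSet I) (U : X → Set X) (hU : ∀ x ∈ I, U x ∈ 𝓝 x) :
    ∃ (M : ℕ) (p : Fin M → X) (D : Fin M → Set X),
      (∀ k, MeasurableSet (D k) ∧ D k ⊆ I ∩ U (p k)) ∧ Pairwise (Disjoint on D) ∧
        ⋃ k, D k = I := by
  obtain ⟨t, ht⟩ := hI.elim_finite_subcover (fun x => interior (U x)) (fun _ => isOpen_interior)
    fun x hx => mem_iUnion.2 ⟨x, mem_interior_iff_mem_nhds.2 (hU x hx)⟩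
  obtain ⟨M, p, hp⟩ := t.finite_toSet.fin_embedding
  rw [← Finset.set_biUnion_coe, ← hp, biUnion_range] at ht
  refine ⟨M, p, disjointed fun k => I ∩ interior (U (p k)), fun k => ⟨?_, ?_⟩,
    disjoint_disjointed _, ?_⟩
  · exact disjointedRec (fun _ _ hs => hs.diff (hIm.inter measurableSet_interior))
      (hIm.inter measurableSet_interior)
  · exact (disjointed_subset _ k).trans (inter_subset_inter_right _ interior_subset)
  · rw [iUnion_disjointed, ← inter_iUnion, inter_eq_left.2 ht]

theorem indicator_iUnion_apply_eq_sum {X ι β : Type*} [Fintype ι] [AddCommMonoid β]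
    {D : ι → Set X} (hD : Pairwise (Disjoint on D)) (g : X → β) (x : X) :
    (⋃ k, D k).indicator g x = ∑ k, (D k).indicator g x := by
  rw [← Finset.indicator_biUnion_apply _ _ fun i _ j _ hij => hD hij]
  simp

theorem norm_indicator_one_sub_sum_le {X ι 𝕜 : Type*} [Fintype ι] [NormedCommRing 𝕜]
    {I : Set X} {D : ι → Set X} (hD : Pairwise (Disjoint on D)) (hDI : ⋃ k, D k = I)
    (c : ι → 𝕜) (f : ι → X → 𝕜) {δ : ℝ} (hδ : ∀ k, ∀ x ∈ D k, ‖1 - c k * f k x‖ ≤ δ) (x : X) :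
    ‖I.indicator (fun _ => 1) x - ∑ k, c k * (D k).indicator (fun _ => 1) x * f k x‖ ≤
      I.indicator (fun _ => δ) x := by
  subst hDI
  calc ‖(⋃ k, D k).indicator (fun _ => 1) x - ∑ k, c k * (D k).indicator (fun _ => 1) x * f k x‖
      = ‖∑ k, (D k).indicator (fun y => 1 - c k * f k y) x‖ := by
        rw [indicator_iUnion_apply_eq_sum hD, ← Finset.sum_sub_distrib]
        congr 1
        refine Finset.sum_congr rfl fun k _ => ?_
        by_cases hx : x ∈ D k <;> simp [hx]
    _ ≤ ∑ k, ‖(D k).indicator (fun y => 1 - c k * f k y) x‖ := norm_sum_le _ _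
    _ ≤ ∑ k, (D k).indicator (fun _ => δ) x := by
        refine Finset.sum_le_sum fun k _ => ?_
        rw [norm_indicator_eq_indicator_norm]
        exact indicator_le_indicator' (hδ k x)
    _ = (⋃ k, D k).indicator (fun _ => δ) x := (indicator_iUnion_apply_eq_sum hD _ x).symm

theorem IsCompact.exists_eLpNorm_indicator_sub_sum_lt {X 𝕜 : Type*} [TopologicalSpace X]
    [MeasurableSpace X] [OpensMeasurableSpace X] [NormedField 𝕜] {μ : Measure X}
    [IsFiniteMeasureOnCompacts μ] {I : Set X} (hI : IsCompact I) (hIm : MeasurableSet I)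
    {f : X → X → 𝕜} (hf : ∀ x ∈ I, ContinuousAt (f x) x) (hf₀ : ∀ x ∈ I, f x x ≠ 0)
    (q : ℝ≥0∞) {ε : ℝ≥0∞} (hε : ε ≠ 0) :
    ∃ (M : ℕ) (p : Fin M → X) (D : Fin M → Set X) (c : Fin M → 𝕜),
      (∀ k, MeasurableSet (D k) ∧ D k ⊆ I) ∧
      eLpNorm (fun x => I.indicator (fun _ => 1) x
          - ∑ k, c k * (D k).indicator (fun _ => 1) x * f (p k) x) q μ < ε := by
  obtain ⟨δ, hδ, hδε⟩ := ENNReal.exists_nnreal_pos_mul_lt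
    (ENNReal.rpow_ne_top_of_nonneg (one_div_nonneg.2 ENNReal.toReal_nonneg)
      (hI.measure_lt_top (μ := μ)).ne) hε
  have hU : ∀ x ∈ I, {y | ‖1 - (f x x)⁻¹ * f x y‖ < δ} ∈ 𝓝 x := by
    intro x hx
    have hg : ContinuousAt (fun y => 1 - (f x x)⁻¹ * f x y) x :=
      continuousAt_const.sub (continuousAt_const.mul (hf x hx))
    have := hg.preimage_mem_nhds (Metric.ball_mem_nhds _ hδ)
    simpa [inv_mul_cancel₀ (hf₀ x hx), Set.preimage, Metric.ball] using this
  obtain ⟨M, p, D, hDm, hD, hDI⟩ := hI.exists_measurable_partition_subordinate hIm _ hU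
  refine ⟨M, p, D, fun k => (f (p k) (p k))⁻¹,
    fun k => ⟨(hDm k).1, (hDm k).2.trans inter_subset_left⟩, ?_⟩
  calc _ ≤ eLpNorm (I.indicator fun _ => (δ : ℝ)) q μ :=
        eLpNorm_mono_real <| norm_indicator_one_sub_sum_le hD hDI _ _
          fun k x hx => ((hDm k).2 hx).2.le
    _ ≤ ‖(δ : ℝ)‖ₑ * μ I ^ (1 / q.toReal) := eLpNorm_indicator_const_le _ _
    _ < ε := by simpa using hδε

theorem EuclideanSpace.isCompact_setOf_forall_mem_Icc {ι : Type*} [Fintype ι] (a b : ι → ℝ) :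
    IsCompact {x : EuclideanSpace ℝ ι | ∀ i, x i ∈ Icc (a i) (b i)} := by
  convert (EuclideanSpace.equiv ι ℝ).toHomeomorph.isCompact_preimage.2
    (isCompact_univ_pi fun i => isCompact_Icc (a := a i) (b := b i)) using 1
  ext x
  simp only [mem_ofPred_eq, mem_preimage, mem_univ_pi]
  rfl

theorem stmt_11_general (d : ℕ)
    (K : EuclideanSpace ℝ (Fin d) × EuclideanSpace ℝ (Fin d) → ℂ)
    (hK : Continuous K)
    (ψ : EuclideanSpace ℝ (Fin d) → ℂ) (hψ : MemLp ψ 2 volume)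
    (hreach : ∀ x : EuclideanSpace ℝ (Fin d),
      ∃ A : Set (EuclideanSpace ℝ (Fin d)), IsCompact A ∧ MeasurableSet A ∧
        ∫ y in A, K (x, y) * ψ y ≠ 0)
    (a b : Fin d → ℝ) (I : Set (EuclideanSpace ℝ (Fin d)))
    (hI : I = {x : EuclideanSpace ℝ (Fin d) | ∀ i, x i ∈ Set.Icc (a i) (b i)})
    (ε : ℝ) (hε : 0 < ε) :
    ∃ (M : ℕ) (A D : Fin M → Set (EuclideanSpace ℝ (Fin d))) (c : Fin M → ℂ),
      (∀ k, IsCompact (A k) ∧ MeasurableSet (A k)) ∧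
      (∀ k, Bornology.IsBounded (D k) ∧ MeasurableSet (D k)) ∧
      eLpNorm
        (fun x => Set.indicator I (fun _ => (1 : ℂ)) x
          - ∑ k, c k * Set.indicator (D k) (fun _ => (1 : ℂ)) x
              * ∫ y in A k, K (x, y) * ψ y)
        2 volume < ENNReal.ofReal ε := by
  choose A hAc hAm hA₀ using hreach
  have hIc : IsCompact I := hI ▸ EuclideanSpace.isCompact_setOf_forall_mem_Icc a b
  have hcont (x) : Continuous fun z => ∫ y in A x, K (z, y) * ψ y :=
    continuous_setIntegral_mul_of_continuous hK (hAc x)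
      ((hψ.locallyIntegrable one_le_two).integrableOn_isCompact (hAc x))
  obtain ⟨M, p, D, c, hD, hlt⟩ := hIc.exists_eLpNorm_indicator_sub_sum_lt (μ := volume)
    hIc.isClosed.measurableSet (fun x _ => (hcont x).continuousAt) (fun x _ => hA₀ x) 2
    (ENNReal.ofReal_pos.2 hε).ne'
  exact ⟨M, A ∘ p, D, c, fun k => ⟨hAc _, hAm _⟩,
    fun k => ⟨hIc.isBounded.subset (hD k).2, (hD k).1⟩, hlt⟩

/-- Approximation of the indicator of a compact `d`-interval `I` of positive
measure: if every point of `ℝ^d` is reachable (some compact measurable set has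
nonzero restricted evolution there), then for every `ε > 0` the indicator
`χ_I` is within `ε` in `L²` of a finite linear combination
`Σ_k c_k · χ_{D_k} · ψ_{A_k}` with `A_k` compact measurable and `D_k` bounded
measurable. -/
theorem stmt_11 (d : ℕ) (hd : 1 ≤ d)
    (K : EuclideanSpace ℝ (Fin d) × EuclideanSpace ℝ (Fin d) → ℂ)
    (hK : Continuous K)
    (ψ : EuclideanSpace ℝ (Fin d) → ℂ) (hψ : MemLp ψ 2 volume)
    (hreach : ∀ x : EuclideanSpace ℝ (Fin d),
      ∃ A : Set (EuclideanSpace ℝ (Fin d)), IsCompact A ∧ MeasurableSet A ∧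
        ∫ y in A, K (x, y) * ψ y ≠ 0)
    (a b : Fin d → ℝ) (I : Set (EuclideanSpace ℝ (Fin d)))
    (hI : I = {x : EuclideanSpace ℝ (Fin d) | ∀ i, x i ∈ Set.Icc (a i) (b i)})
    (hIpos : 0 < volume I)
    (ε : ℝ) (hε : 0 < ε) :
    ∃ (M : ℕ) (A D : Fin M → Set (EuclideanSpace ℝ (Fin d))) (c : Fin M → ℂ),
      (∀ k, IsCompact (A k) ∧ MeasurableSet (A k)) ∧
      (∀ k, Bornology.IsBounded (D k) ∧ MeasurableSet (D k)) ∧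
      eLpNorm
        (fun x => Set.indicator I (fun _ => (1 : ℂ)) x
          - ∑ k, c k * Set.indicator (D k) (fun _ => (1 : ℂ)) x
              * ∫ y in A k, K (x, y) * ψ y)
        2 volume < ENNReal.ofReal ε :=
  stmt_11_general d K hK ψ hψ hreach a b I hI ε hε
end

section
/- Let K : ℝ^d × ℝ^d → ℂ be continuous and ψ ∈ L²(ℝ^d), and suppose that for every x ∈ ℝ^d there exists a compact Lebesgue-measurable set A ⊆ ℝ^d with ψ_A(x) ≠ 0. Then the ℂ-linear span of the set { χ_B · ψ_A : A ⊆ ℝ^d compact Lebesgue-measurable, B ⊆ ℝ^d bounded Lebesgue-measurable } is dense in L²(ℝ^d). (This is the onto-ness of the natural map f from the History Hilbert space H₂ to L²(ℝ^d), which together with its injectivity and inner-product preservation shows that the History Hilbert space is isomorphic to the standard Hilbert space L²(ℝ^d).) -/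
open MeasureTheory

/-- The set of `L²` classes of the functions `χ_B · ψ_A` (`A` compact
measurable, `B` bounded measurable), where `ψ_A x = ∫_A K (x, y) ψ y dy`. -/
def restrictedEvolutionSet (d : ℕ)
    (K : EuclideanSpace ℝ (Fin d) × EuclideanSpace ℝ (Fin d) → ℂ)
    (ψ : EuclideanSpace ℝ (Fin d) → ℂ) :
    Set (Lp ℂ 2 (volume : Measure (EuclideanSpace ℝ (Fin d)))) :=
  {f | ∃ A B : Set (EuclideanSpace ℝ (Fin d)),
    IsCompact A ∧ MeasurableSet A ∧ Bornology.IsBounded B ∧ MeasurableSet B ∧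
    (f : EuclideanSpace ℝ (Fin d) → ℂ) =ᵐ[volume]
      fun x => Set.indicator B (fun _ => (1 : ℂ)) x * ∫ y in A, K (x, y) * ψ y}

/-!
If `g ∈ L²` is orthogonal to every `χ_B · ψ_A`, then `∫_B conj ψ_A · g = 0` for every compact `B`,
so `conj ψ_A · g = 0` a.e., i.e. `g` vanishes a.e. on the open set `{ψ_A ≠ 0}`. Reachability says
these open sets cover `ℝ^d`, and by second countability countably many of them suffice, so `g = 0`.
-/

open Filter Set
open scoped ComplexConjugate InnerProductSpace

section ParametricIntegral

variable {X Y 𝕜 : Type*} [TopologicalSpace X] [FirstCountableTopology X] [LocallyCompactSpace X]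
  [TopologicalSpace Y] [MeasurableSpace Y] [OpensMeasurableSpace Y] [RCLike 𝕜] {μ : Measure Y}

theorem continuous_setIntegral_mul_of_integrableOn {K : X × Y → 𝕜} (hK : Continuous K)
    {ψ : Y → 𝕜} {A : Set Y} (hA : IsCompact A) (hAm : MeasurableSet A)
    (hψ : IntegrableOn ψ A μ) :
    Continuous fun x => ∫ y in A, K (x, y) * ψ y ∂μ := by
  refine continuous_iff_continuousAt.2 fun x₀ => ?_
  obtain ⟨U, hU, hUx⟩ := exists_compact_mem_nhds x₀
  obtain ⟨C, hC⟩ := (hU.prod hA).exists_bound_of_continuousOn hK.continuousOn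
  refine continuousAt_of_dominated (bound := fun y => C * ‖ψ y‖) ?_ ?_ (hψ.norm.const_mul C) ?_
  · exact Eventually.of_forall fun x =>
      (hK.comp (continuous_const.prodMk continuous_id)).aestronglyMeasurable.mul
        hψ.aestronglyMeasurable
  · filter_upwards [hUx] with x hx
    refine ae_restrict_of_forall_mem hAm fun y hy => ?_
    rw [norm_mul]
    exact mul_le_mul_of_nonneg_right (hC (x, y) ⟨hx, hy⟩) (norm_nonneg _)
  · exact ae_of_all _ fun y =>
      ((hK.comp (continuous_id.prodMk continuous_const)).mul continuous_const).continuousAt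

end ParametricIntegral

theorem ae_of_isOpen_cover {X ι : Type*} [TopologicalSpace X] [SecondCountableTopology X]
    [MeasurableSpace X] {μ : Measure X} {U : ι → Set X} (hU : ∀ i, IsOpen (U i))
    (hcover : ∀ x, ∃ i, x ∈ U i) {p : X → Prop} (h : ∀ i, ∀ᵐ x ∂μ, x ∈ U i → p x) :
    ∀ᵐ x ∂μ, p x := by
  obtain ⟨T, hTc, hTU⟩ := TopologicalSpace.isOpen_iUnion_countable U hU
  filter_upwards [(ae_ball_iff hTc).2 fun i _ => h i] with x hx
  obtain ⟨i, hxi⟩ := hcover x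
  obtain ⟨j, hj, hxj⟩ := mem_iUnion₂.1 (hTU.symm ▸ mem_iUnion.2 ⟨i, hxi⟩ : x ∈ ⋃ j ∈ T, U j)
  exact hx j hj hxj

section L2

variable {X 𝕜 : Type*} [MeasurableSpace X] [RCLike 𝕜] {μ : Measure X}

theorem L2.inner_eq_setIntegral_of_ae_eq_indicator {B : Set X} (hB : MeasurableSet B)
    {f : X → 𝕜} {h : Lp 𝕜 2 μ} (hh : h =ᵐ[μ] B.indicator f) (g : Lp 𝕜 2 μ) :
    ⟪h, g⟫_𝕜 = ∫ x in B, conj (f x) * g x ∂μ := by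
  rw [L2.inner_def, ← integral_indicator hB]
  refine integral_congr_ae ?_
  filter_upwards [hh] with x hx
  rw [RCLike.inner_apply, hx]
  by_cases hxB : x ∈ B <;> simp [hxB, mul_comm]

variable [TopologicalSpace X] [T2Space X] [OpensMeasurableSpace X] [IsFiniteMeasureOnCompacts μ]

theorem Continuous.memLp_indicator_of_isCompact {E : Type*} [NormedAddCommGroup E]
    [SecondCountableTopologyEither X E]
    {f : X → E} (hf : Continuous f) {B : Set X} (hB : IsCompact B) (p : ENNReal) :
    MemLp (B.indicator f) p μ := by
  obtain ⟨C, hC⟩ := hB.exists_bound_of_continuousOn hf.continuousOn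
  refine (HasCompactSupport.intro hB fun x hx => indicator_of_notMem hx f).memLp_of_bound
    (hf.aestronglyMeasurable.indicator hB.measurableSet) (max C 0) (ae_of_all _ fun x => ?_)
  by_cases hx : x ∈ B
  · simpa [hx] using Or.inl (hC x hx)
  · simp [hx]

variable [BorelSpace X] [LocallyCompactSpace X] [SigmaCompactSpace X]

theorem ae_eq_zero_of_ne_zero_of_forall_inner_indicator_eq_zero {f : X → 𝕜} (hf : Continuous f)
    {g : Lp 𝕜 2 μ}
    (hg : ∀ B, IsCompact B → ∀ h : Lp 𝕜 2 μ, h =ᵐ[μ] B.indicator f → ⟪h, g⟫_𝕜 = 0) :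
    ∀ᵐ x ∂μ, f x ≠ 0 → g x = 0 := by
  have hloc : LocallyIntegrable (fun x => conj (f x) * g x) μ :=
    ((Lp.memLp g).locallyIntegrable one_le_two).continuous_mul (RCLike.continuous_conj.comp hf)
  have hzero := ae_eq_zero_of_forall_setIntegral_isCompact_eq_zero' hloc fun B hB => by
    have hfB := (hf.memLp_indicator_of_isCompact (μ := μ) hB 2).coeFn_toLp
    rw [← L2.inner_eq_setIntegral_of_ae_eq_indicator hB.measurableSet hfB]
    exact hg B hB _ hfB
  filter_upwards [hzero] with x hx hfx
  simpa [hfx] using hx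

end L2

theorem stmt_12_general (d : ℕ)
    (K : EuclideanSpace ℝ (Fin d) × EuclideanSpace ℝ (Fin d) → ℂ)
    (hK : Continuous K)
    (ψ : EuclideanSpace ℝ (Fin d) → ℂ) (hψ : MemLp ψ 2 volume)
    (hreach : ∀ x : EuclideanSpace ℝ (Fin d),
      ∃ A : Set (EuclideanSpace ℝ (Fin d)), IsCompact A ∧ MeasurableSet A ∧
        ∫ y in A, K (x, y) * ψ y ≠ 0) :
    Dense (Submodule.span ℂ (restrictedEvolutionSet d K ψ) :
      Set (Lp ℂ 2 (volume : Measure (EuclideanSpace ℝ (Fin d))))) := by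
  rw [Submodule.dense_iff_topologicalClosure_eq_top, Submodule.topologicalClosure_eq_top_iff,
    Submodule.eq_bot_iff]
  intro g hg
  have hψA {A} (hA : IsCompact A) (hAm : MeasurableSet A) :
      Continuous fun x => ∫ y in A, K (x, y) * ψ y :=
    continuous_setIntegral_mul_of_integrableOn hK hA hAm
      ((hψ.locallyIntegrable one_le_two).integrableOn_isCompact hA)
  have hvanish (A : {A // IsCompact A ∧ MeasurableSet A}) :
      ∀ᵐ x, x ∈ {x | ∫ y in A.1, K (x, y) * ψ y ≠ 0} → g x = 0 := by
    refine ae_eq_zero_of_ne_zero_of_forall_inner_indicator_eq_zero (hψA A.2.1 A.2.2)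
      fun B hB h hh => (Submodule.mem_orthogonal _ g).1 hg h (Submodule.subset_span ?_)
    refine ⟨A.1, B, A.2.1, A.2.2, hB.isBounded, hB.measurableSet, hh.trans ?_⟩
    exact ae_of_all _ fun x => by by_cases hx : x ∈ B <;> simp [hx]
  refine Lp.eq_zero_iff_ae_eq_zero.2 (ae_of_isOpen_cover
    (fun A => isOpen_compl_singleton.preimage (hψA A.2.1 A.2.2)) (fun x => ?_) hvanish)
  obtain ⟨A, hA, hAm, hx⟩ := hreach x
  exact ⟨⟨A, hA, hAm⟩, hx⟩

/-- Onto-ness of the natural map from the History Hilbert space to `L²(ℝ^d)`: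
if every point of `ℝ^d` is reachable (some compact measurable set has nonzero
restricted evolution there), the `ℂ`-span of the vectors `χ_B · ψ_A` is dense
in `L²(ℝ^d)`. -/
theorem stmt_12 (d : ℕ) (hd : 1 ≤ d)
    (K : EuclideanSpace ℝ (Fin d) × EuclideanSpace ℝ (Fin d) → ℂ)
    (hK : Continuous K)
    (ψ : EuclideanSpace ℝ (Fin d) → ℂ) (hψ : MemLp ψ 2 volume)
    (hreach : ∀ x : EuclideanSpace ℝ (Fin d),
      ∃ A : Set (EuclideanSpace ℝ (Fin d)), IsCompact A ∧ MeasurableSet A ∧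
        ∫ y in A, K (x, y) * ψ y ≠ 0) :
    Dense (Submodule.span ℂ (restrictedEvolutionSet d K ψ) :
      Set (Lp ℂ 2 (volume : Measure (EuclideanSpace ℝ (Fin d))))) :=
  stmt_12_general d K hK ψ hψ hreach
end

section
/- Fix d ≥ 1, a nonzero real number a and a nonzero complex number c, and let K : ℝ^d × ℝ^d → ℂ be the free-particle propagator K(x,y) = c · exp(i a ‖x − y‖²) (for a free particle of mass m evolving for time T one has a = m/(2ħT) and c = (m/(2πiħT))^{d/2}). Then K is continuous and nowhere zero, and for every ψ ∈ L²(ℝ^d) that is not almost everywhere zero, the ℂ-linear span of the set { χ_B · ψ_A : A ⊆ ℝ^d compact Lebesgue-measurable, B ⊆ ℝ^d bounded Lebesgue-measurable } is dense in L²(ℝ^d). -/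
/-!
Let `g ∈ L²` be orthogonal to every `χ_B · ψ_A`. Since `ψ_A` is continuous, the integrals of
`conj ψ_A · g` over all balls `B` vanish, so by Lebesgue differentiation `conj ψ_A · g = 0` a.e.
Letting `A` run through the countably many balls with centres in a countable dense set and
radii `1 / (n + 1)`, at almost every `x` with `g x ≠ 0` all integrals of `K (x, ·) ψ` over these
balls vanish, so again by Lebesgue differentiation `K (x, ·) ψ = 0` a.e., and `ψ = 0` a.e. since
`K` does not vanish. Hence `g = 0`.
-/

open MeasureTheory Metric Filter Topology
open scoped ComplexConjugate

section LebesgueDifferentiation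

variable {α E : Type*} [PseudoMetricSpace α] [MeasurableSpace α] [BorelSpace α]
  [SecondCountableTopology α] {μ : Measure α} [IsLocallyFiniteMeasure μ]
  [IsUnifLocDoublingMeasure μ] [NormedAddCommGroup E] [NormedSpace ℝ E] [CompleteSpace E]

/-- Balls centred in a dense set with radii `1 / (n + 1)` shrink to almost every point, so by the
Lebesgue differentiation theorem `f` is the limit of its (vanishing) averages over them. -/
theorem ae_eq_zero_of_setIntegral_closedBall_eq_zero {f : α → E} (hf : LocallyIntegrable f μ)
    {D : Set α} (hD : Dense D)
    (hball : ∀ z ∈ D, ∀ n : ℕ, ∫ y in closedBall z (1 / (n + 1)), f y ∂μ = 0) :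
    f =ᵐ[μ] 0 := by
  filter_upwards [IsUnifLocDoublingMeasure.ae_tendsto_average μ hf 1] with x hx
  have hcenter : ∀ n : ℕ, ∃ z ∈ D, dist x z < 1 / (n + 1) := fun n =>
    Metric.mem_closure_iff.1 (hD x) _ Nat.one_div_pos_of_nat
  choose z hzD hz using hcenter
  have hradius : Tendsto (fun n : ℕ => 1 / ((n : ℝ) + 1)) atTop (𝓝[>] 0) :=
    tendsto_nhdsWithin_of_tendsto_nhds_of_eventually_within _
      tendsto_one_div_add_atTop_nhds_zero_nat
      (Eventually.of_forall fun _ => Set.mem_Ioi.2 Nat.one_div_pos_of_nat)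
  have hlim := hx z _ hradius (Eventually.of_forall fun n => by
    rw [one_mul, mem_closedBall]; exact (hz n).le)
  simp only [setAverage_eq, hball _ (hzD _), smul_zero] at hlim
  exact tendsto_nhds_unique hlim tendsto_const_nhds

end LebesgueDifferentiation

theorem Continuous.memLp_indicator_of_isBounded {α E : Type*} [PseudoMetricSpace α]
    [ProperSpace α] [MeasurableSpace α] [OpensMeasurableSpace α] {μ : Measure α}
    [IsFiniteMeasureOnCompacts μ] [NormedAddCommGroup E] {f : α → E} (hf : Continuous f)
    {B : Set α} (hB : Bornology.IsBounded B) (hBm : MeasurableSet B) (p : ENNReal) :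
    MemLp (B.indicator f) p μ := by
  rw [memLp_indicator_iff_restrict hBm]
  have : IsFiniteMeasure (μ.restrict B) :=
    ⟨by rw [Measure.restrict_apply_univ]; exact hB.measure_lt_top⟩
  obtain ⟨C, hC⟩ := hB.isCompact_closure.exists_bound_of_continuousOn hf.continuousOn
  exact MemLp.of_bound hf.aestronglyMeasurable.restrict C
    (ae_restrict_of_forall_mem hBm fun x hx => hC x (subset_closure hx))

section RestrictedEvolution

variable {X Y : Type*} [TopologicalSpace X] [TopologicalSpace Y] [MeasurableSpace Y]

/-- The paper's `ψ_A`. -/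
noncomputable def restrictedEvolution (K : X × Y → ℂ) (ψ : Y → ℂ) (μ : Measure Y) (A : Set Y)
    (x : X) : ℂ :=
  ∫ y in A, K (x, y) * ψ y ∂μ

theorem continuous_restrictedEvolution [WeaklyLocallyCompactSpace X] [FirstCountableTopology X]
    [T2Space Y] [OpensMeasurableSpace Y] {μ : Measure Y} {K : X × Y → ℂ} (hK : Continuous K)
    {ψ : Y → ℂ} {A : Set Y} (hA : IsCompact A) (hψ : IntegrableOn ψ A μ) :
    Continuous (restrictedEvolution K ψ μ A) := by
  refine continuous_iff_continuousAt.2 fun x₀ => ?_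
  obtain ⟨U, hUc, hU⟩ := exists_compact_mem_nhds x₀
  obtain ⟨C, hC⟩ := (hUc.prod hA).exists_bound_of_continuousOn hK.continuousOn
  refine continuousAt_of_dominated (bound := fun y => C * ‖ψ y‖) ?_ ?_ (hψ.norm.const_mul C) ?_
  · exact Eventually.of_forall fun x =>
      (hK.comp (Continuous.prodMk_right x)).aestronglyMeasurable.mul hψ.aestronglyMeasurable
  · filter_upwards [hU] with x hx
    filter_upwards [ae_restrict_mem hA.measurableSet] with y hy
    rw [norm_mul]
    exact mul_le_mul_of_nonneg_right (hC (x, y) ⟨hx, hy⟩) (norm_nonneg _)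
  · exact Eventually.of_forall fun y =>
      ((hK.comp (continuous_id.prodMk continuous_const)).mul continuous_const).continuousAt

end RestrictedEvolution

section Density

variable {d : ℕ} {K : EuclideanSpace ℝ (Fin d) × EuclideanSpace ℝ (Fin d) → ℂ}
  {ψ : EuclideanSpace ℝ (Fin d) → ℂ}

theorem setIntegral_conj_restrictedEvolution_mul_eq_zero (hK : Continuous K)
    (hψ : LocallyIntegrable ψ volume) {g : Lp ℂ 2 (volume : Measure (EuclideanSpace ℝ (Fin d)))}
    (hg : g ∈ (Submodule.span ℂ (restrictedEvolutionSet d K ψ))ᗮ)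
    {A B : Set (EuclideanSpace ℝ (Fin d))} (hA : IsCompact A) (hB : Bornology.IsBounded B)
    (hBm : MeasurableSet B) :
    ∫ x in B, conj (restrictedEvolution K ψ volume A x) * g x = 0 := by
  set ψA := restrictedEvolution K ψ volume A
  have hcont : Continuous ψA := continuous_restrictedEvolution hK hA (hψ.integrableOn_isCompact hA)
  have hmem : MemLp (B.indicator ψA) 2 volume := hcont.memLp_indicator_of_isBounded hB hBm 2
  have hf : hmem.toLp _ ∈ restrictedEvolutionSet d K ψ :=
    ⟨A, B, hA, hA.measurableSet, hB, hBm, hmem.coeFn_toLp.trans (Eventually.of_forall fun x => by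
      by_cases hx : x ∈ B <;> simp [hx, ψA, restrictedEvolution])⟩
  have h0 : inner ℂ (hmem.toLp _) g = 0 := hg _ (Submodule.subset_span hf)
  rw [L2.inner_def] at h0
  rw [← h0, ← integral_indicator hBm]
  refine integral_congr_ae ?_
  filter_upwards [hmem.coeFn_toLp] with x hx
  rw [RCLike.inner_apply, hx]
  by_cases hxB : x ∈ B <;> simp [hxB, mul_comm]

theorem conj_restrictedEvolution_mul_ae_eq_zero (hK : Continuous K)
    (hψ : LocallyIntegrable ψ volume) {g : Lp ℂ 2 (volume : Measure (EuclideanSpace ℝ (Fin d)))}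
    (hg : g ∈ (Submodule.span ℂ (restrictedEvolutionSet d K ψ))ᗮ)
    {A : Set (EuclideanSpace ℝ (Fin d))} (hA : IsCompact A) :
    (fun x => conj (restrictedEvolution K ψ volume A x) * g x) =ᵐ[volume] 0 := by
  have hcont := continuous_restrictedEvolution hK hA (hψ.integrableOn_isCompact hA)
  exact ae_eq_zero_of_setIntegral_closedBall_eq_zero
    (((Lp.memLp g).locallyIntegrable one_le_two).continuous_mul
      (Complex.continuous_conj.comp hcont)) dense_univ fun _ _ _ =>
    setIntegral_conj_restrictedEvolution_mul_eq_zero hK hψ hg hA isBounded_closedBall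
      measurableSet_closedBall

theorem ae_eq_zero_of_restrictedEvolution_closedBall_eq_zero (hK : Continuous K)
    (hK0 : ∀ p, K p ≠ 0) (hψ : LocallyIntegrable ψ volume) {D : Set (EuclideanSpace ℝ (Fin d))}
    (hD : Dense D) {x : EuclideanSpace ℝ (Fin d)}
    (hx : ∀ z ∈ D, ∀ n : ℕ, restrictedEvolution K ψ volume (closedBall z (1 / (n + 1))) x = 0) :
    ψ =ᵐ[volume] 0 := by
  have hprod : (fun y => K (x, y) * ψ y) =ᵐ[volume] 0 :=
    ae_eq_zero_of_setIntegral_closedBall_eq_zero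
      (hψ.continuous_mul (hK.comp (Continuous.prodMk_right x))) hD hx
  filter_upwards [hprod] with y hy
  exact (mul_eq_zero.1 hy).resolve_left (hK0 (x, y))

theorem dense_span_restrictedEvolutionSet (hK : Continuous K) (hK0 : ∀ p, K p ≠ 0)
    (hψ : LocallyIntegrable ψ volume) (hψ0 : ¬ ψ =ᵐ[volume] 0) :
    Dense (Submodule.span ℂ (restrictedEvolutionSet d K ψ) :
      Set (Lp ℂ 2 (volume : Measure (EuclideanSpace ℝ (Fin d))))) := by
  rw [Submodule.dense_iff_topologicalClosure_eq_top, Submodule.topologicalClosure_eq_top_iff,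
    Submodule.eq_bot_iff]
  intro g hg
  obtain ⟨D, hDc, hD⟩ := TopologicalSpace.exists_countable_dense (EuclideanSpace ℝ (Fin d))
  have : Countable D := hDc.to_subtype
  have hae : ∀ᵐ x ∂volume, ∀ (z : D) (n : ℕ),
      conj (restrictedEvolution K ψ volume (closedBall ↑z (1 / (n + 1))) x) * g x = 0 :=
    ae_all_iff.2 fun _ => ae_all_iff.2 fun _ =>
      conj_restrictedEvolution_mul_ae_eq_zero hK hψ hg (isCompact_closedBall _ _)
  refine Lp.eq_zero_iff_ae_eq_zero.2 ?_
  filter_upwards [hae] with x hx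
  by_contra hgx
  exact hψ0 (ae_eq_zero_of_restrictedEvolution_closedBall_eq_zero hK hK0 hψ hD (x := x)
    fun z hz n => by simpa using (mul_eq_zero.1 (hx ⟨z, hz⟩ n)).resolve_right hgx)

end Density

theorem stmt_15_general (d : ℕ) (a : ℝ) (c : ℂ) (hc : c ≠ 0)
    (K : EuclideanSpace ℝ (Fin d) × EuclideanSpace ℝ (Fin d) → ℂ)
    (hK : K = fun p => c * Complex.exp (Complex.I * (a : ℂ) * ((‖p.1 - p.2‖ : ℂ)) ^ 2)) :
    Continuous K ∧ (∀ p, K p ≠ 0) ∧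
    ∀ ψ : EuclideanSpace ℝ (Fin d) → ℂ, MemLp ψ 2 volume →
      ¬ (ψ =ᵐ[(volume : Measure (EuclideanSpace ℝ (Fin d)))] 0) →
      Dense (Submodule.span ℂ (restrictedEvolutionSet d K ψ) :
        Set (Lp ℂ 2 (volume : Measure (EuclideanSpace ℝ (Fin d))))) := by
  have hKc : Continuous K := by rw [hK]; fun_prop
  have hK0 : ∀ p, K p ≠ 0 := fun p => by rw [hK]; exact mul_ne_zero hc (Complex.exp_ne_zero _)
  exact ⟨hKc, hK0, fun ψ hψ hψ0 =>
    dense_span_restrictedEvolutionSet hKc hK0 (hψ.locallyIntegrable one_le_two) hψ0⟩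

/-- The free-particle propagator `K(x,y) = c · exp(i a ‖x - y‖²)` (with `a ≠ 0`,
`c ≠ 0`) is continuous and nowhere zero, and for every initial state
`ψ ∈ L²(ℝ^d)` that is not almost everywhere zero, the `ℂ`-span of the vectors
`χ_B · ψ_A` (`A` compact measurable, `B` bounded measurable) is dense in
`L²(ℝ^d)`. -/
theorem stmt_15 (d : ℕ) (hd : 1 ≤ d) (a : ℝ) (ha : a ≠ 0) (c : ℂ) (hc : c ≠ 0)
    (K : EuclideanSpace ℝ (Fin d) × EuclideanSpace ℝ (Fin d) → ℂ)
    (hK : K = fun p => c * Complex.exp (Complex.I * (a : ℂ) * ((‖p.1 - p.2‖ : ℂ)) ^ 2)) :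
    Continuous K ∧ (∀ p, K p ≠ 0) ∧
    ∀ ψ : EuclideanSpace ℝ (Fin d) → ℂ, MemLp ψ 2 volume →
      ¬ (ψ =ᵐ[(volume : Measure (EuclideanSpace ℝ (Fin d)))] 0) →
      Dense (Submodule.span ℂ (restrictedEvolutionSet d K ψ) :
        Set (Lp ℂ 2 (volume : Measure (EuclideanSpace ℝ (Fin d))))) :=
  stmt_15_general d a c hc K hK
end
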